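/- arXiv:2009.11391 — 4 statements merged into one kernel-verified Lean document; each statement's English description precedes it below -/
import Mathlib

section
/- Let X ⊂ ℙV be a projective variety and let ℙE ⊂ σ_r(X) be an (r−1)-plane that arises as a limit E = lim_{t→0} ⟨x_1(t), …, x_r(t)⟩ in the Grassmannian G(r,V), where each x_j(t) ∈ X and the points are linearly independent for t ≠ 0. Then there exists a complete flag E_1 ⊂ E_2 ⊂ ⋯ ⊂ E_r = E such that ℙE_j ⊂ σ_j(X) for all 1 ≤ j ≤ r. -/
open scoped BigOperators Topology

/-- The (affine cone over the) `r`-th secant variety of a cone `X ⊆ ℂⁿ`: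
the closure of the set of sums of `r` points of `X` (equivalently, of the union of
the spans of `r` points of `X`, when `X` is a cone). -/
noncomputable def secantCone {n : ℕ} (X : Set (Fin n → ℂ)) (r : ℕ) : Set (Fin n → ℂ) :=
  closure {v | ∃ x : Fin r → (Fin n → ℂ), (∀ i, x i ∈ X) ∧ v = ∑ i, x i}

/-- The Plücker coordinate vector of an `r`-tuple of vectors in `ℂⁿ`, whose entries are the
`r × r` minors; up to scale it records the point of the Grassmannian `G(r, ℂⁿ)` spanned by
the tuple. -/
noncomputable def pluecker {n r : ℕ} (x : Fin r → (Fin n → ℂ)) : (Fin r → Fin n) → ℂ :=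
  fun σ => Matrix.det (Matrix.of fun i j => x i (σ j))

/-! Choose parameters `tₖ → 0`. Gram–Schmidt replaces the frames `x(tₖ)` by orthonormal frames
with the same partial spans, and by compactness a subsequence of these converges to an
orthonormal frame `w`. Continuity of Plücker coordinates makes `pluecker e` a nonzero multiple of
`pluecker w`, so `w` spans `E`. The partial spans of `w` form the flag: a vector of
`⟨w₁, …, w_j⟩` is a limit of vectors of `⟨x₁(tₖ), …, x_j(tₖ)⟩`, which are sums of `j` points of
the cone `X`. -/

open Filter Set Submodule

section Pluecker

variable {n r : ℕ}

theorem continuous_pluecker :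
    Continuous (pluecker : (Fin r → Fin n → ℂ) → (Fin r → Fin n) → ℂ) := by
  unfold pluecker
  fun_prop

theorem pluecker_ne_zero {w : Fin r → Fin n → ℂ} (hw : LinearIndependent ℂ w) :
    pluecker w ≠ 0 := by
  have hcols : span ℂ (range (Matrix.of w).col) = ⊤ := eq_top_of_finrank_eq <| by
    rw [← Matrix.rank_eq_finrank_span_cols, Module.finrank_fin_fun]
    exact hw.rank_matrix.trans (Fintype.card_fin r)
  obtain ⟨κ, a, -, hspan, hind⟩ := exists_linearIndependent' ℂ (Matrix.of w).col
  let b : Module.Basis κ ℂ (Fin r → ℂ) := .mk hind (by rw [hspan, hcols])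
  let ε : Fin r ≃ κ := (Pi.basisFun ℂ (Fin r)).indexEquiv b
  have hcol : LinearIndependent ℂ (Matrix.of fun i j => w i (a (ε j))).col :=
    hind.comp ε ε.injective
  have hdet :=
    (Matrix.isUnit_iff_isUnit_det _).mp (Matrix.linearIndependent_cols_iff_isUnit.mp hcol)
  exact fun h => hdet.ne_zero (congrFun h (a ∘ ε))

theorem pluecker_cons (v : Fin n → ℂ) (y : Fin r → Fin n → ℂ) (τ : Fin (r + 1) → Fin n) :
    pluecker (Fin.cons v y) τ =
      ∑ j : Fin (r + 1), (-1) ^ (j : ℕ) * v (τ j) * pluecker y (τ ∘ j.succAbove) := by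
  rw [pluecker, Matrix.det_succ_row_zero]
  rfl

theorem pluecker_cons_self (y : Fin r → Fin n → ℂ) (i : Fin r) :
    pluecker (Fin.cons (y i) y) = 0 :=
  funext fun _ => Matrix.det_zero_of_row_eq (Fin.succ_ne_zero i).symm (funext fun _ => rfl)

theorem pluecker_cons_eq_smul {a b : Fin r → Fin n → ℂ} {c : ℂ}
    (h : pluecker a = c • pluecker b) (v : Fin n → ℂ) :
    pluecker (Fin.cons v a) = c • pluecker (Fin.cons v b) := by
  funext τ
  simp only [pluecker_cons, h, Pi.smul_apply, smul_eq_mul, Finset.mul_sum]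
  exact Finset.sum_congr rfl fun _ _ => by ring

theorem mem_span_of_pluecker_eq_smul {a b : Fin r → Fin n → ℂ} {c : ℂ}
    (hb : LinearIndependent ℂ b) (hc : c ≠ 0) (h : pluecker a = c • pluecker b) (i : Fin r) :
    a i ∈ span ℂ (range b) := by
  by_contra hai
  apply pluecker_ne_zero (linearIndependent_finCons.mpr ⟨hb, hai⟩)
  have hcons := pluecker_cons_eq_smul h (a i)
  rw [pluecker_cons_self] at hcons
  exact (smul_eq_zero.mp hcons.symm).resolve_left hc

theorem span_eq_of_pluecker_eq_smul {a b : Fin r → Fin n → ℂ} {c : ℂ}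
    (ha : LinearIndependent ℂ a) (hb : LinearIndependent ℂ b) (hc : c ≠ 0)
    (h : pluecker a = c • pluecker b) : span ℂ (range a) = span ℂ (range b) :=
  eq_of_le_of_finrank_le
    (span_le.mpr (range_subset_iff.mpr (mem_span_of_pluecker_eq_smul hb hc h)))
    (by rw [finrank_span_eq_card ha, finrank_span_eq_card hb])

theorem exists_pluecker_eq_smul_of_mem_span {a b : Fin r → Fin n → ℂ}
    (h : ∀ i, a i ∈ span ℂ (range b)) : ∃ d : ℂ, pluecker a = d • pluecker b := by
  choose M hM using fun i => (mem_span_range_iff_exists_fun ℂ).mp (h i)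
  refine ⟨(Matrix.of M).det, funext fun σ => ?_⟩
  have hmat :
      (Matrix.of fun i j => a i (σ j)) = Matrix.of M * Matrix.of fun l j => b l (σ j) := by
    ext i j
    simp [Matrix.mul_apply, ← hM]
  simp only [pluecker, hmat, Matrix.det_mul, Pi.smul_apply, smul_eq_mul]

end Pluecker

theorem exists_eq_smul_of_tendsto_smul {α ι 𝕜 : Type*} [Field 𝕜] [TopologicalSpace 𝕜]
    [IsTopologicalDivisionRing 𝕜] [T2Space 𝕜] {l : Filter α} [l.NeBot] {γ : α → 𝕜}
    {P : α → ι → 𝕜} {p q : ι → 𝕜} (hγP : Tendsto (fun k => γ k • P k) l (𝓝 p))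
    (hP : Tendsto P l (𝓝 q)) (hq : q ≠ 0) : ∃ c : 𝕜, p = c • q := by
  obtain ⟨σ, hσ⟩ : ∃ σ, q σ ≠ 0 := Function.ne_iff.mp hq
  have hPσ : Tendsto (fun k => P k σ) l (𝓝 (q σ)) := tendsto_pi_nhds.mp hP σ
  have hγ : Tendsto γ l (𝓝 (p σ / q σ)) := by
    refine ((tendsto_pi_nhds.mp hγP σ).div hPσ hσ).congr' ?_
    filter_upwards [hPσ.eventually_ne hσ] with k hk
    simp only [Pi.div_apply, Pi.smul_apply, smul_eq_mul, mul_div_cancel_right₀ _ hk]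
  exact ⟨p σ / q σ, tendsto_nhds_unique hγP (hγ.smul hP)⟩

theorem span_image_subset_of_tendsto {α ι R M : Type*} [Semiring R] [TopologicalSpace M]
    [AddCommMonoid M] [Module R M] [ContinuousAdd M] [ContinuousConstSMul R M]
    {l : Filter α} [l.NeBot] {z : α → ι → M} {w : ι → M} {s : Set ι} {C : Set M}
    (hC : IsClosed C) (hz : Tendsto z l (𝓝 w))
    (hzC : ∀ᶠ k in l, (span R (z k '' s) : Set M) ⊆ C) : (span R (w '' s) : Set M) ⊆ C := by
  intro v hv
  obtain ⟨t, hts, c, rfl⟩ := mem_span_image_iff_exists_fun R |>.mp hv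
  refine hC.mem_of_tendsto (b := l) (f := fun k => ∑ i : t, c i • z k i) ?_ ?_
  · exact tendsto_finsetSum _ fun i _ => (tendsto_pi_nhds.mp hz i).const_smul (c i)
  · filter_upwards [hzC] with k hk
    exact hk (sum_smul_mem _ c fun i _ => subset_span (mem_image_of_mem _ (hts i.2)))

section GramSchmidt

open InnerProductSpace

variable {𝕜 E ι : Type*} [RCLike 𝕜] [NormedAddCommGroup E] [InnerProductSpace 𝕜 E]

theorem isClosed_setOf_orthonormal : IsClosed {v : ι → E | Orthonormal 𝕜 v} := by
  classical
  simp only [orthonormal_iff_ite, ofPred_forall]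
  exact isClosed_iInter fun i => isClosed_iInter fun j =>
    isClosed_eq (by fun_prop) continuous_const

theorem isCompact_setOf_orthonormal [ProperSpace E] [Finite ι] :
    IsCompact {v : ι → E | Orthonormal 𝕜 v} :=
  (isCompact_univ_pi fun _ => isCompact_sphere (0 : E) 1).of_isClosed_subset
    isClosed_setOf_orthonormal fun v hv i _ => by simpa using hv.1 i

variable [LinearOrder ι] [LocallyFiniteOrderBot ι] [WellFoundedLT ι]

theorem span_gramSchmidt_of_isLowerSet (f : ι → E) {s : Set ι} (hs : IsLowerSet s) :
    span 𝕜 (gramSchmidt 𝕜 f '' s) = span 𝕜 (f '' s) :=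
  span_eq_span
    (image_subset_iff.2 fun _ hi =>
      span_mono (image_mono (hs.Iic_subset hi)) (gramSchmidt_mem_span 𝕜 f le_rfl))
    (image_subset_iff.2 fun _ hi =>
      span_mono (image_mono (hs.Iic_subset hi)) (mem_span_gramSchmidt 𝕜 f le_rfl))

theorem exists_subseq_tendsto_gramSchmidtNormed [ProperSpace E] [Finite ι]
    {f : ℕ → ι → E} (hf : ∀ k, LinearIndependent 𝕜 (f k)) :
    ∃ (u : ι → E) (φ : ℕ → ℕ), StrictMono φ ∧ Orthonormal 𝕜 u ∧
      Tendsto (fun k => gramSchmidtNormed 𝕜 (f (φ k))) atTop (𝓝 u) := by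
  obtain ⟨u, hu, φ, hφ, hlim⟩ := isCompact_setOf_orthonormal.tendsto_subseq
    fun k => gramSchmidtNormed_orthonormal (hf k)
  exact ⟨u, φ, hφ, hu, hlim⟩

end GramSchmidt

def partialSpan (K : Type*) {V : Type*} [Semiring K] [AddCommMonoid V] [Module K V] {r : ℕ}
    (w : Fin r → V) (j : ℕ) : Submodule K V :=
  span K (w '' {i | (i : ℕ) < j})

section PartialSpan

variable {K V : Type*} [Semiring K] [AddCommMonoid V] [Module K V] {r j : ℕ}

theorem partialSpan_eq_span_range_castLE (w : Fin r → V) (hj : j ≤ r) :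
    partialSpan K w j = span K (range (w ∘ Fin.castLE hj)) := by
  rw [partialSpan, range_comp, Fin.range_castLE]

theorem monotone_partialSpan (w : Fin r → V) : Monotone (partialSpan K w) :=
  fun _ _ h => span_mono (image_mono fun _ hi => lt_of_lt_of_le hi h)

theorem partialSpan_self (w : Fin r → V) : partialSpan K w r = span K (range w) := by
  rw [partialSpan, show {i : Fin r | (i : ℕ) < r} = univ from eq_univ_of_forall Fin.is_lt,
    image_univ]

theorem finrank_partialSpan {K V : Type*} [DivisionRing K] [AddCommGroup V] [Module K V]
    {w : Fin r → V} (hw : LinearIndependent K w) (hj : j ≤ r) :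
    Module.finrank K (partialSpan K w j) = j := by
  rw [partialSpan_eq_span_range_castLE w hj,
    finrank_span_eq_card (hw.comp _ (Fin.castLE_injective hj)), Fintype.card_fin]

end PartialSpan

open InnerProductSpace in
theorem exists_subseq_tendsto_partialSpan_eq {n r : ℕ} {y : ℕ → Fin r → Fin n → ℂ}
    (hy : ∀ k, LinearIndependent ℂ (y k)) :
    ∃ (φ : ℕ → ℕ) (z : ℕ → Fin r → Fin n → ℂ) (w : Fin r → Fin n → ℂ),
      StrictMono φ ∧ LinearIndependent ℂ w ∧ Tendsto z atTop (𝓝 w) ∧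
      ∀ k j, partialSpan ℂ (z k) j = partialSpan ℂ (y (φ k)) j := by
  let L := EuclideanSpace.equiv (Fin n) ℂ
  obtain ⟨u, φ, hφ, hu, hlim⟩ := exists_subseq_tendsto_gramSchmidtNormed (𝕜 := ℂ)
    (f := fun k => L.symm ∘ y k) fun k => (hy k).map' L.symm.toLinearMap (LinearEquiv.ker _)
  refine ⟨φ, fun k => L ∘ gramSchmidtNormed ℂ (L.symm ∘ y (φ k)), L ∘ u, hφ,
    hu.linearIndependent.map' L.toLinearMap (LinearEquiv.ker _), ?_, fun k j => ?_⟩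
  · have hL : Continuous fun g : Fin r → EuclideanSpace ℂ (Fin n) => L ∘ g := by fun_prop
    exact (hL.tendsto u).comp hlim
  · have hspan := congrArg (Submodule.map (L : EuclideanSpace ℂ (Fin n) →ₗ[ℂ] Fin n → ℂ))
      ((span_gramSchmidtNormed (L.symm ∘ y (φ k)) {i | (i : ℕ) < j}).trans
        (span_gramSchmidt_of_isLowerSet _ fun _ _ hba hb => Nat.lt_of_le_of_lt hba hb))
    simpa [partialSpan, map_span, image_comp, image_image] using hspan

section Secant

variable {n : ℕ} {X : Set (Fin n → ℂ)}

theorem span_range_subset_secantCone (hX : ∀ (c : ℂ), ∀ v ∈ X, c • v ∈ X) {j : ℕ}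
    {y : Fin j → Fin n → ℂ} (hy : ∀ i, y i ∈ X) :
    (span ℂ (range y) : Set (Fin n → ℂ)) ⊆ secantCone X j := by
  intro v hv
  obtain ⟨a, rfl⟩ := (mem_span_range_iff_exists_fun ℂ).mp hv
  exact subset_closure ⟨fun i => a i • y i, fun i => hX _ _ (hy i), rfl⟩

theorem partialSpan_subset_secantCone (hX : ∀ (c : ℂ), ∀ v ∈ X, c • v ∈ X) {r j : ℕ}
    {y : Fin r → Fin n → ℂ} (hy : ∀ i, y i ∈ X) (hj : j ≤ r) :
    (partialSpan ℂ y j : Set (Fin n → ℂ)) ⊆ secantCone X j := by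
  rw [partialSpan_eq_span_range_castLE y hj]
  exact span_range_subset_secantCone hX fun _ => hy _

end Secant

theorem flag_of_limit_plane_general {n r : ℕ} (X : Set (Fin n → ℂ))
    (hXcone : ∀ (c : ℂ), ∀ v ∈ X, c • v ∈ X)
    (x : ℂ → Fin r → (Fin n → ℂ))
    (hxX : ∀ t : ℂ, t ≠ 0 → ∀ i, x t i ∈ X)
    (hxind : ∀ t : ℂ, t ≠ 0 → LinearIndependent ℂ (x t))
    (e : Fin r → (Fin n → ℂ)) (he : LinearIndependent ℂ e)
    (c : ℂ → ℂ)
    (hlim : Filter.Tendsto (fun t => c t • pluecker (x t)) (𝓝[≠] (0 : ℂ))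
      (𝓝 (pluecker e))) :
    ∃ E : Fin (r + 1) → Submodule ℂ (Fin n → ℂ),
      Monotone E ∧
      (∀ j, Module.finrank ℂ ↥(E j) = (j : ℕ)) ∧
      E (Fin.last r) = Submodule.span ℂ (Set.range e) ∧
      ∀ j : Fin (r + 1), (E j : Set (Fin n → ℂ)) ⊆ secantCone X (j : ℕ) := by
  obtain ⟨t, ht, ht0⟩ := exists_seq_forall_of_frequently
    (Eventually.frequently (self_mem_nhdsWithin : {0}ᶜ ∈ 𝓝[≠] (0 : ℂ)))
  obtain ⟨φ, z, w, hφ, hw, hzw, hspan⟩ :=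
    exists_subseq_tendsto_partialSpan_eq fun k => hxind _ (ht0 k)
  have hxz : ∀ k i, x (t (φ k)) i ∈ span ℂ (range (z k)) := fun k i => by
    rw [← partialSpan_self, hspan k r, partialSpan_self]
    exact subset_span (mem_range_self i)
  choose d hd using fun k => exists_pluecker_eq_smul_of_mem_span (hxz k)
  obtain ⟨c₀, hc₀⟩ := exists_eq_smul_of_tendsto_smul (γ := fun k => c (t (φ k)) * d k)
    (by simpa only [Function.comp_def, hd, mul_smul] using hlim.comp (ht.comp hφ.tendsto_atTop))
    ((continuous_pluecker.tendsto w).comp hzw) (pluecker_ne_zero hw)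
  have hc₀_ne : c₀ ≠ 0 := by
    rintro rfl
    exact pluecker_ne_zero he (by simpa using hc₀)
  refine ⟨fun j => partialSpan ℂ w j, fun _ _ h => monotone_partialSpan w h,
    fun j => finrank_partialSpan hw j.is_le, ?_, fun j => ?_⟩
  · exact (partialSpan_self w).trans (span_eq_of_pluecker_eq_smul he hw hc₀_ne hc₀).symm
  · refine span_image_subset_of_tendsto isClosed_closure hzw (.of_forall fun k => ?_)
    exact (congrArg SetLike.coe (hspan k j)).trans_subset
      (partialSpan_subset_secantCone hXcone (hxX _ (ht0 _)) j.is_le)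

/-- Let `X ⊆ ℙV` be a projective variety (formalized via its closed affine cone `X ⊆ ℂⁿ`),
and let `ℙE ⊆ σ_r(X)` be an `(r−1)`-plane arising as a limit
`E = lim_{t→0} ⟨x_1(t), …, x_r(t)⟩` in the Grassmannian `G(r, V)` (formalized via convergence
of rescaled Plücker coordinates), where each `x_j(t) ∈ X` and the points are linearly
independent for `t ≠ 0`. Then there is a complete flag `E_0 ⊂ E_1 ⊂ ⋯ ⊂ E_r = E` with
`ℙE_j ⊆ σ_j(X)` for all `j`. -/
theorem flag_of_limit_plane {n r : ℕ} (X : Set (Fin n → ℂ)) (hXcl : IsClosed X)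
    (hXcone : ∀ (c : ℂ), ∀ v ∈ X, c • v ∈ X)
    (x : ℂ → Fin r → (Fin n → ℂ))
    (hxX : ∀ t : ℂ, t ≠ 0 → ∀ i, x t i ∈ X)
    (hxind : ∀ t : ℂ, t ≠ 0 → LinearIndependent ℂ (x t))
    (e : Fin r → (Fin n → ℂ)) (he : LinearIndependent ℂ e)
    (c : ℂ → ℂ)
    (hlim : Filter.Tendsto (fun t => c t • pluecker (x t)) (𝓝[≠] (0 : ℂ))
      (𝓝 (pluecker e))) :
    ∃ E : Fin (r + 1) → Submodule ℂ (Fin n → ℂ),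
      Monotone E ∧
      (∀ j, Module.finrank ℂ ↥(E j) = (j : ℕ)) ∧
      E (Fin.last r) = Submodule.span ℂ (Set.range e) ∧
      ∀ j : Fin (r + 1), (E j : Set (Fin n → ℂ)) ⊆ secantCone X (j : ℕ) :=
  flag_of_limit_plane_general X hXcone x hxX hxind e he c hlim
end

section
/- The small Coppersmith–Winograd tensor T_{cw,q} has border rank at most q + 2. Concretely, with the (q+2) curves of rank-one tensors given by m_α(t) = t^{-2}(a_0 + t a_α)⊗(b_0 + t b_α)⊗(c_0 + t c_α) for α = 1,…,q, m_{q+1}(t) = −t^{-3}(a_0 + t²Σ_α a_α)⊗(b_0 + t²Σ_α b_α)⊗(c_0 + t²Σ_α c_α), and m_{q+2}(t) = −(q t^{-2} − t^{-3}) a_0⊗b_0⊗c_0, one has T_{cw,q} = lim_{t→0} Σ_{s=1}^{q+2} m_s(t). -/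
open scoped BigOperators Topology

/-- The border rank of a 3-way tensor `T` over `ℂ`. -/
noncomputable def tBorderRank {ι κ μ : Type*} [Fintype ι] [Fintype κ] [Fintype μ]
    (T : ι → κ → μ → ℂ) : ℕ :=
  sInf {r : ℕ | T ∈ closure {S : ι → κ → μ → ℂ |
    ∃ u : Fin r → ι → ℂ, ∃ v : Fin r → κ → ℂ, ∃ w : Fin r → μ → ℂ,
      S = fun i j k => ∑ s, u s i * v s j * w s k}}

/-- The standard basis vector `e_j` of `ℂⁿ`, as a function. -/
def stdVec {n : ℕ} (j : Fin n) : Fin n → ℂ := fun i => if i = j then 1 else 0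

/-- The small Coppersmith–Winograd tensor
`T_{cw,q} = Σ_{j=1}^q (a_0⊗b_j⊗c_j + a_j⊗b_0⊗c_j + a_j⊗b_j⊗c_0)` in
`ℂ^{q+1} ⊗ ℂ^{q+1} ⊗ ℂ^{q+1}`, in coordinates. -/
noncomputable def Tcw (q : ℕ) : Fin (q + 1) → Fin (q + 1) → Fin (q + 1) → ℂ :=
  fun i j k => ∑ l : Fin q,
    (stdVec 0 i * stdVec l.succ j * stdVec l.succ k
      + stdVec l.succ i * stdVec 0 j * stdVec l.succ k
      + stdVec l.succ i * stdVec l.succ j * stdVec 0 k)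

/-! Expanding the products, the poles of `Σ_s m_s(t)` cancel: the `t⁻³` and `t⁻²` terms against
`m_{q+2}`, and the `t⁻¹` terms of `Σ_α m_α` against that of `m_{q+1}`. What is left is a
polynomial in `t` with constant term `T_{cw,q}`, so these tensors of rank `≤ q + 2` converge to
`T_{cw,q}`. -/

def tensorsRankLE (R : Type*) [Semiring R] (ι κ μ : Type*) (r : ℕ) : Set (ι → κ → μ → R) :=
  {S | ∃ u : Fin r → ι → R, ∃ v : Fin r → κ → R, ∃ w : Fin r → μ → R,
    S = fun i j k => ∑ s, u s i * v s j * w s k}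

section TensorRank

variable {R : Type*} {ι κ μ : Type*}

theorem sum_smul_rankOne_mem_tensorsRankLE [Semiring R] {r : ℕ} (c : Fin r → R)
    (x : Fin r → ι → R) (y : Fin r → κ → R) (z : Fin r → μ → R) :
    (fun i j k => ∑ s, c s * (x s i * y s j * z s k)) ∈ tensorsRankLE R ι κ μ r :=
  ⟨fun s i => c s * x s i, y, z, by simp only [mul_assoc]⟩

theorem sub_smul_rankOne_mem_tensorsRankLE [Ring R] {r : ℕ} {S : ι → κ → μ → R}
    (hS : S ∈ tensorsRankLE R ι κ μ r) (c : R) (x : ι → R) (y : κ → R) (z : μ → R) :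
    (fun i j k => S i j k - c * (x i * y j * z k)) ∈ tensorsRankLE R ι κ μ (r + 1) := by
  obtain ⟨u, v, w, rfl⟩ := hS
  refine ⟨Fin.snoc u (fun i => -c * x i), Fin.snoc v y, Fin.snoc w z, ?_⟩
  funext i j k
  simp only [Fin.sum_univ_castSucc, Fin.snoc_castSucc, Fin.snoc_last, neg_mul, mul_assoc,
    sub_eq_add_neg]

theorem tBorderRank_le_of_tendsto [Fintype ι] [Fintype κ] [Fintype μ] {α : Type*}
    {l : Filter α} [l.NeBot] {f : α → ι → κ → μ → ℂ} {T : ι → κ → μ → ℂ} {r : ℕ}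
    (hf : Filter.Tendsto f l (𝓝 T)) (hr : ∀ᶠ t in l, f t ∈ tensorsRankLE ℂ ι κ μ r) :
    tBorderRank T ≤ r :=
  Nat.sInf_le (mem_closure_of_tendsto hf hr)

end TensorRank

section Degeneration

variable {K : Type*} {q : ℕ} (A B C : K) (a b c : Fin q → K)

theorem cw_degeneration_eq [Field K] {t : K} (ht : t ≠ 0) :
    (∑ α, t ^ (-2 : ℤ) * ((A + t * a α) * (B + t * b α) * (C + t * c α)))
      - t ^ (-3 : ℤ) * ((A + t ^ 2 * ∑ α, a α) * (B + t ^ 2 * ∑ α, b α) * (C + t ^ 2 * ∑ α, c α))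
      - ((q : K) * t ^ (-2 : ℤ) - t ^ (-3 : ℤ)) * (A * B * C)
    = (∑ α, (A * b α * c α + a α * B * c α + a α * b α * C))
      + t * ((∑ α, a α * b α * c α)
          - ((∑ α, a α) * (∑ α, b α) * C + (∑ α, a α) * B * (∑ α, c α)
              + A * (∑ α, b α) * (∑ α, c α)))
      - t ^ 3 * ((∑ α, a α) * (∑ α, b α) * (∑ α, c α)) := by
  have expand : ∀ x y z : K, t ^ (-2 : ℤ) * ((A + t * x) * (B + t * y) * (C + t * z))
      = t ^ (-2 : ℤ) * (A * B * C) + t⁻¹ * (x * B * C + A * y * C + A * B * z)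
        + (x * y * C + x * B * z + A * y * z) + t * (x * y * z) := by
    intro x y z
    field_simp
    ring
  simp only [expand, Finset.sum_add_distrib, ← Finset.mul_sum, ← Finset.sum_mul,
    Finset.sum_const, Finset.card_univ, Fintype.card_fin, nsmul_eq_mul]
  field_simp
  ring

theorem tendsto_cw_degeneration [NormedField K] :
    Filter.Tendsto
      (fun t : K => (∑ α, t ^ (-2 : ℤ) * ((A + t * a α) * (B + t * b α) * (C + t * c α)))
        - t ^ (-3 : ℤ) * ((A + t ^ 2 * ∑ α, a α) * (B + t ^ 2 * ∑ α, b α) * (C + t ^ 2 * ∑ α, c α))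
        - ((q : K) * t ^ (-2 : ℤ) - t ^ (-3 : ℤ)) * (A * B * C))
      (𝓝[≠] 0) (𝓝 (∑ α, (A * b α * c α + a α * B * c α + a α * b α * C))) := by
  refine Filter.Tendsto.congr'
    (eventually_nhdsWithin_of_forall fun t ht => (cw_degeneration_eq A B C a b c ht).symm) ?_
  exact (Continuous.tendsto' (by fun_prop) 0 _ (by simp)).mono_left nhdsWithin_le_nhds

end Degeneration

/-- The paper's `Σ_{s=1}^{q+2} m_s(t)`. -/
noncomputable def cwCurve (q : ℕ) (t : ℂ) : Fin (q + 1) → Fin (q + 1) → Fin (q + 1) → ℂ :=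
  fun i j k =>
    (∑ α : Fin q, t ^ (-2 : ℤ) *
      ((stdVec 0 i + t * stdVec α.succ i) * (stdVec 0 j + t * stdVec α.succ j) *
        (stdVec 0 k + t * stdVec α.succ k)))
    - t ^ (-3 : ℤ) *
      ((stdVec 0 i + t ^ 2 * ∑ α : Fin q, stdVec α.succ i) *
       (stdVec 0 j + t ^ 2 * ∑ α : Fin q, stdVec α.succ j) *
       (stdVec 0 k + t ^ 2 * ∑ α : Fin q, stdVec α.succ k))
    - ((q : ℂ) * t ^ (-2 : ℤ) - t ^ (-3 : ℤ)) * (stdVec 0 i * stdVec 0 j * stdVec 0 k)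

theorem cwCurve_mem_tensorsRankLE (q : ℕ) (t : ℂ) :
    cwCurve q t ∈ tensorsRankLE ℂ (Fin (q + 1)) (Fin (q + 1)) (Fin (q + 1)) (q + 2) :=
  sub_smul_rankOne_mem_tensorsRankLE (sub_smul_rankOne_mem_tensorsRankLE
    (sum_smul_rankOne_mem_tensorsRankLE _ _ _ _) _ _ _ _) _ _ _ _

theorem tendsto_cwCurve (q : ℕ) : Filter.Tendsto (cwCurve q) (𝓝[≠] 0) (𝓝 (Tcw q)) :=
  tendsto_pi_nhds.2 fun i => tendsto_pi_nhds.2 fun j => tendsto_pi_nhds.2 fun k =>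
    tendsto_cw_degeneration (stdVec 0 i) (stdVec 0 j) (stdVec 0 k)
      (fun α => stdVec α.succ i) (fun α => stdVec α.succ j) (fun α => stdVec α.succ k)

theorem borderRank_Tcw_le_general (q : ℕ) :
    tBorderRank (Tcw q) ≤ q + 2 ∧
    Filter.Tendsto
      (fun t : ℂ => (fun i j k =>
        (∑ α : Fin q, t ^ (-2 : ℤ) *
          ((stdVec 0 i + t * stdVec α.succ i) * (stdVec 0 j + t * stdVec α.succ j) *
            (stdVec 0 k + t * stdVec α.succ k)))
        - t ^ (-3 : ℤ) *
          ((stdVec 0 i + t ^ 2 * ∑ α : Fin q, stdVec α.succ i) *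
           (stdVec 0 j + t ^ 2 * ∑ α : Fin q, stdVec α.succ j) *
           (stdVec 0 k + t ^ 2 * ∑ α : Fin q, stdVec α.succ k))
        - ((q : ℂ) * t ^ (-2 : ℤ) - t ^ (-3 : ℤ)) *
            (stdVec 0 i * stdVec 0 j * stdVec 0 k) :
          Fin (q + 1) → Fin (q + 1) → Fin (q + 1) → ℂ))
      (𝓝[≠] (0 : ℂ)) (𝓝 (Tcw q)) :=
  ⟨tBorderRank_le_of_tendsto (tendsto_cwCurve q)
    (Filter.Eventually.of_forall (cwCurve_mem_tensorsRankLE q)), tendsto_cwCurve q⟩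

/-- `R̲(T_{cw,q}) ≤ q + 2`, witnessed by the explicit border rank decomposition
`T_{cw,q} = lim_{t→0} Σ_{s=1}^{q+2} m_s(t)` with
`m_α(t) = t^{-2}(a_0+t a_α)⊗(b_0+t b_α)⊗(c_0+t c_α)` for `α = 1,…,q`,
`m_{q+1}(t) = -t^{-3}(a_0+t²Σa_α)⊗(b_0+t²Σb_α)⊗(c_0+t²Σc_α)`, and
`m_{q+2}(t) = -(q t^{-2} - t^{-3}) a_0⊗b_0⊗c_0`. -/
theorem borderRank_Tcw_le (q : ℕ) (hq : 1 ≤ q) :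
    tBorderRank (Tcw q) ≤ q + 2 ∧
    Filter.Tendsto
      (fun t : ℂ => (fun i j k =>
        (∑ α : Fin q, t ^ (-2 : ℤ) *
          ((stdVec 0 i + t * stdVec α.succ i) * (stdVec 0 j + t * stdVec α.succ j) *
            (stdVec 0 k + t * stdVec α.succ k)))
        - t ^ (-3 : ℤ) *
          ((stdVec 0 i + t ^ 2 * ∑ α : Fin q, stdVec α.succ i) *
           (stdVec 0 j + t ^ 2 * ∑ α : Fin q, stdVec α.succ j) *
           (stdVec 0 k + t ^ 2 * ∑ α : Fin q, stdVec α.succ k))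
        - ((q : ℂ) * t ^ (-2 : ℤ) - t ^ (-3 : ℤ)) *
            (stdVec 0 i * stdVec 0 j * stdVec 0 k) :
          Fin (q + 1) → Fin (q + 1) → Fin (q + 1) → ℂ))
      (𝓝[≠] (0 : ℂ)) (𝓝 (Tcw q)) :=
  borderRank_Tcw_le_general q
end

section
/- For any tensor T ∈ A ⊗ B ⊗ C and any p, the border rank satisfies R̲(T) ≥ rank(T_A^{∧p}) / C(dim A − 1, p), where T_A^{∧p} : Λ^p A ⊗ B* → Λ^{p+1} A ⊗ C is the p-th Koszul flattening. -/
open scoped BigOperators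

/-- The `p`-th Koszul flattening `T_A^{∧p} : Λᵖ A ⊗ B* → Λ^{p+1} A ⊗ C` of a tensor
`T ∈ A ⊗ B ⊗ C`, `X ⊗ β ↦ Σ T^{ijk} β(b_j) (a_i ∧ X) ⊗ c_k`, written as a matrix in the
standard monomial bases of the exterior powers (indexed by subsets of the index set of a basis
of `A`, with the usual wedge signs). -/
noncomputable def koszulFlattening {a b c : ℕ} (T : Fin a → Fin b → Fin c → ℂ) (p : ℕ) :
    Matrix ({S : Finset (Fin a) // S.card = p + 1} × Fin c)
      ({S : Finset (Fin a) // S.card = p} × Fin b) ℂ :=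
  fun R C =>
    ∑ i : Fin a,
      if i ∉ C.1.1 ∧ insert i C.1.1 = R.1.1 then
        (-1 : ℂ) ^ (C.1.1.filter (fun j => j < i)).card * T i C.2 R.2
      else 0

/-! The Koszul flattening depends linearly, hence continuously, on `T`, and matrices of rank
`≤ k` form a closed set; so by subadditivity of rank it suffices to treat a rank-one tensor
`u ⊗ v ⊗ w`. Its flattening is `(u ∧ ·) ⊗ (w vᵀ)`, of rank at most that of
`u ∧ · : Λᵖ → Λᵖ⁺¹`. If `u i₀ ≠ 0`, then `u ∧ u = 0` expresses `u ∧ e_Y` for `i₀ ∈ Y` through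
the `u ∧ e_Y'` with `i₀ ∉ Y'`, and there are `C(a - 1, p)` such `Y'`. -/

open Finset Matrix
open scoped Kronecker

lemma Fintype.sum_sum_eq_zero_of_antisymm {ι M : Type*} [Fintype ι] [AddCommGroup M]
    (h : ι → ι → M) (hanti : ∀ i j, h i j = -h j i) (hdiag : ∀ i, h i i = 0) :
    ∑ i, ∑ j, h i j = 0 := by
  rw [← Fintype.sum_prod_type']
  refine sum_ninvolution Prod.swap (fun x => ?_) (fun x hx => ?_) (fun _ => mem_univ _)
    Prod.swap_swap
  · rw [hanti]; exact neg_add_cancel _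
  · rintro hswap
    obtain ⟨i, j⟩ := x
    obtain rfl : j = i := congrArg Prod.fst hswap
    exact hx (hdiag j)

section Wedge

variable {α R : Type*} [LinearOrder α] [CommRing R]

def wedgeSign (S : Finset α) (i : α) : R := (-1) ^ #{j ∈ S | j < i}

lemma wedgeSign_insert {S : Finset α} {j : α} (hj : j ∉ S) (i : α) :
    (wedgeSign (insert j S) i : R) = wedgeSign S i * if j < i then -1 else 1 := by
  unfold wedgeSign
  rw [filter_insert]
  split_ifs with h
  · rw [card_insert_of_notMem (by simp [hj]), pow_succ]
  · rw [mul_one]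

lemma wedgeSign_insert_mul_wedgeSign {S : Finset α} {i j : α} (hij : i ≠ j) (hi : i ∉ S)
    (hj : j ∉ S) :
    (wedgeSign (insert j S) i * wedgeSign S j : R) =
      -(wedgeSign (insert i S) j * wedgeSign S i) := by
  rw [wedgeSign_insert hj, wedgeSign_insert hi]
  rcases hij.lt_or_gt with h | h
  · rw [if_neg h.not_gt, if_pos h]; ring
  · rw [if_pos h, if_neg h.not_gt]; ring

variable [Fintype α]

/-- The coefficient of `e_X` in `u ∧ e_Y`, where `e_i ∧ e_Y = wedgeSign Y i • e_{insert i Y}`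
for `i ∉ Y`. -/
def wedgeCoeff (u : α → R) (X Y : Finset α) : R :=
  ∑ i, if i ∉ Y ∧ insert i Y = X then wedgeSign Y i * u i else 0

lemma wedgeCoeff_insert (u : α → R) {Y : Finset α} {i : α} (hi : i ∉ Y) :
    wedgeCoeff u (insert i Y) Y = wedgeSign Y i * u i := by
  rw [wedgeCoeff, Fintype.sum_eq_single i]
  · rw [if_pos ⟨hi, rfl⟩]
  · intro k hk
    rw [if_neg]
    rintro ⟨hkY, heq⟩
    have hk' : k ∈ insert i Y := heq ▸ mem_insert_self k Y
    exact hk ((mem_insert.1 hk').resolve_right hkY)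

lemma wedgeCoeff_eq_zero (u : α → R) {X Y : Finset α} (h : ∀ i ∉ Y, insert i Y ≠ X) :
    wedgeCoeff u X Y = 0 :=
  sum_eq_zero fun i _ => if_neg fun hi => h i hi.1 hi.2

lemma sum_mul_wedgeCoeff (u : α → R) (f : Finset α → R) {p : ℕ} {Y : Finset α}
    (hY : #Y = p) :
    ∑ X : {X : Finset α // #X = p + 1}, f X * wedgeCoeff u X Y =
      ∑ i, if i ∉ Y then f (insert i Y) * (wedgeSign Y i * u i) else 0 := by
  simp only [wedgeCoeff, mul_sum]
  rw [sum_comm]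
  refine sum_congr rfl fun i _ => ?_
  by_cases hi : i ∈ Y
  · simp [hi]
  rw [if_pos hi, Fintype.sum_eq_single ⟨insert i Y, by rw [card_insert_of_notMem hi, hY]⟩]
  · rw [if_pos ⟨hi, rfl⟩]
  · intro X hX
    rw [if_neg fun h => hX (Subtype.ext h.2.symm), mul_zero]

def wedgeMatrix (u : α → R) (p : ℕ) :
    Matrix {X : Finset α // #X = p + 1} {Y : Finset α // #Y = p} R :=
  Matrix.of fun X Y => wedgeCoeff u X.1 Y.1

lemma wedgeMatrix_mul_wedgeMatrix (u : α → R) (p : ℕ) :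
    wedgeMatrix u (p + 1) * wedgeMatrix u p = 0 := by
  ext X Y
  simp only [mul_apply, wedgeMatrix, of_apply, Matrix.zero_apply]
  rw [sum_mul_wedgeCoeff u (wedgeCoeff u X) Y.2]
  let h : α → α → R := fun j i =>
    if j ≠ i ∧ j ∉ Y.1 ∧ i ∉ Y.1 ∧ insert j (insert i Y.1) = X.1 then
      wedgeSign (insert i Y.1) j * wedgeSign Y.1 i * (u j * u i) else 0
  have hsplit : ∀ i, (if i ∉ Y.1 then
      wedgeCoeff u X (insert i Y.1) * (wedgeSign Y.1 i * u i) else 0) = ∑ j, h j i := by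
    intro i
    by_cases hi : i ∈ Y.1
    · simp [h, hi]
    simp only [h, hi, not_false_eq_true, true_and, if_true, wedgeCoeff, sum_mul, mem_insert,
      not_or, ne_eq]
    refine sum_congr rfl fun j _ => ?_
    split_ifs <;> first | ring1 | (exfalso; tauto)
  rw [sum_congr rfl fun i _ => hsplit i, sum_comm]
  refine Fintype.sum_sum_eq_zero_of_antisymm h (fun j i => ?_) (fun i => by simp [h])
  by_cases hcond : j ≠ i ∧ j ∉ Y.1 ∧ i ∉ Y.1 ∧ insert j (insert i Y.1) = X.1
  · have hcond' : i ≠ j ∧ i ∉ Y.1 ∧ j ∉ Y.1 ∧ insert i (insert j Y.1) = X.1 :=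
      ⟨Ne.symm hcond.1, hcond.2.2.1, hcond.2.1, by rw [insert_comm, hcond.2.2.2]⟩
    simp only [h, if_pos hcond, if_pos hcond']
    rw [wedgeSign_insert_mul_wedgeSign hcond.1 hcond.2.1 hcond.2.2.1]
    ring
  · have hcond' : ¬(i ≠ j ∧ i ∉ Y.1 ∧ j ∉ Y.1 ∧ insert i (insert j Y.1) = X.1) :=
      fun ⟨hij, hi, hj, hX⟩ => hcond ⟨hij.symm, hj, hi, by rw [insert_comm, hX]⟩
    simp only [h, if_neg hcond, if_neg hcond', neg_zero]

end Wedge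

namespace Matrix

variable {l m n o K : Type*} [Field K] [Fintype n]

lemma col_mem_span_of_mulVec_eq_zero {A : Matrix m n K} {y : n → K} (hAy : A *ᵥ y = 0) {j : n}
    (hj : y j ≠ 0) {s : Set n} (hs : ∀ k ≠ j, y k ≠ 0 → k ∈ s) :
    A.col j ∈ Submodule.span K (A.col '' s) := by
  classical
  have hsum : y j • A.col j + ∑ k ∈ univ.erase j, y k • A.col k = 0 := by
    rw [add_sum_erase _ (fun k => y k • A.col k) (mem_univ j), ← hAy, mulVec_eq_sum]
    simp [col]
  refine (Submodule.smul_mem_iff _ hj).1 ?_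
  rw [eq_neg_of_add_eq_zero_left hsum]
  refine neg_mem (sum_mem fun k hk => ?_)
  by_cases hyk : y k = 0
  · simp [hyk]
  exact Submodule.smul_mem _ _ (Submodule.subset_span ⟨k, hs k (ne_of_mem_erase hk) hyk, rfl⟩)

lemma rank_le_card_of_col_mem_span [Fintype m] {A : Matrix m n K} (s : Finset n)
    (h : ∀ j, A.col j ∈ Submodule.span K (A.col '' s)) : A.rank ≤ #s := by
  classical
  calc A.rank = Module.finrank K (Submodule.span K (Set.range A.col)) :=
        rank_eq_finrank_span_cols A
    _ ≤ Module.finrank K (Submodule.span K (A.col '' s)) :=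
        Submodule.finrank_mono (Submodule.span_le.2 (Set.range_subset_iff.2 h))
    _ ≤ #s := by
        rw [← coe_image]
        exact (finrank_span_finset_le_card _).trans card_image_le

lemma rank_add_le (A B : Matrix m n K) : (A + B).rank ≤ A.rank + B.rank := by
  have hle : LinearMap.range (A + B).mulVecLin
      ≤ LinearMap.range A.mulVecLin ⊔ LinearMap.range B.mulVecLin := by
    rintro x ⟨y, rfl⟩
    rw [mulVecLin_add]
    exact Submodule.add_mem_sup ⟨y, rfl⟩ ⟨y, rfl⟩
  exact (Submodule.finrank_mono hle).trans (Submodule.finrank_add_le_finrank_add_finrank _ _)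

lemma rank_sum_le {ι : Type*} (s : Finset ι) (A : ι → Matrix m n K) :
    (∑ i ∈ s, A i).rank ≤ ∑ i ∈ s, (A i).rank :=
  le_sum_of_subadditive (fun B : Matrix m n K => B.rank) rank_zero.le rank_add_le s A

lemma kronecker_vecMulVec_eq_mul_mul [Fintype m] [DecidableEq m] [DecidableEq n]
    (A : Matrix m n K) (w : l → K) (v : o → K) :
    A ⊗ₖ vecMulVec w v =
      (of fun (x : m × l) (x' : m) => if x.1 = x' then w x.2 else 0) * A *
        of fun (y' : n) (y : n × o) => if y' = y.1 then v y.2 else 0 := by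
  ext ⟨x, k⟩ ⟨y, j⟩
  simp [mul_apply, ite_mul, vecMulVec_apply]
  ring

lemma rank_kronecker_vecMulVec_le [Fintype m] [Fintype l] [Fintype o] (A : Matrix m n K)
    (w : l → K) (v : o → K) :
    (A ⊗ₖ vecMulVec w v).rank ≤ A.rank := by
  classical
  rw [kronecker_vecMulVec_eq_mul_mul]
  exact (rank_mul_le_left _ _).trans (rank_mul_le_right _ _)

end Matrix

section WedgeRank

variable {α K : Type*} [LinearOrder α] [Fintype α] [Field K]

lemma wedgeMatrix_col_mem_span {u : α → K} {i₀ : α} (hu : u i₀ ≠ 0) {p : ℕ}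
    (Y : {Y : Finset α // #Y = p}) :
    (wedgeMatrix u p).col Y ∈
      Submodule.span K ((wedgeMatrix u p).col '' {Y' | i₀ ∉ Y'.1}) := by
  by_cases hY : i₀ ∉ Y.1
  · exact Submodule.subset_span ⟨Y, hY, rfl⟩
  rw [not_not] at hY
  obtain ⟨q, rfl⟩ : ∃ q, p = q + 1 :=
    Nat.exists_eq_add_one_of_ne_zero (Y.2 ▸ (card_pos.2 ⟨i₀, hY⟩).ne')
  let Z : {Z : Finset α // #Z = q} := ⟨Y.1.erase i₀, by rw [card_erase_of_mem hY, Y.2]; rfl⟩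
  have hZ : i₀ ∉ Z.1 := notMem_erase i₀ Y.1
  have hYZ : Y.1 = insert i₀ Z.1 := (insert_erase hY).symm
  -- `u ∧ e_Z` is killed by `u ∧ ·`, and among the `e_X` with `i₀ ∈ X` it only involves `e_Y`.
  refine Matrix.col_mem_span_of_mulVec_eq_zero (y := (wedgeMatrix u q).col Z) ?_ ?_ ?_
  · rw [← mulVec_single_one, mulVec_mulVec, wedgeMatrix_mul_wedgeMatrix, zero_mulVec]
  · simp only [col_apply, wedgeMatrix, of_apply, hYZ, wedgeCoeff_insert u hZ]
    exact mul_ne_zero (pow_ne_zero _ (neg_ne_zero.2 one_ne_zero)) hu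
  · intro X hXY hX
    by_contra hiX
    refine hX (wedgeCoeff_eq_zero u fun i hi hiZ => hXY (Subtype.ext ?_))
    have : i₀ ∈ insert i Z.1 := hiZ ▸ not_not.1 hiX
    rw [← hiZ, hYZ, (mem_insert.1 this).resolve_right hZ]

lemma card_filter_notMem_le_choose (i₀ : α) (p : ℕ) :
    #{Y : {Y : Finset α // #Y = p} | i₀ ∉ Y.1} ≤ (Fintype.card α - 1).choose p := by
  rw [← card_univ, ← card_erase_of_mem (mem_univ i₀), ← card_powersetCard]
  refine card_le_card_of_injOn Subtype.val (fun Y hY => ?_) Subtype.val_injective.injOn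
  simp only [coe_filter, mem_univ, true_and, Set.mem_ofPred_eq] at hY
  rw [mem_coe, mem_powersetCard]
  exact ⟨fun x hx => mem_erase.2 ⟨fun h => hY (h ▸ hx), mem_univ x⟩, Y.2⟩

theorem rank_wedgeMatrix_le (u : α → K) (p : ℕ) :
    (wedgeMatrix u p).rank ≤ (Fintype.card α - 1).choose p := by
  by_cases hu : u = 0
  · have : wedgeMatrix u p = 0 := by ext; simp [wedgeMatrix, wedgeCoeff, hu]
    simp [this]
  obtain ⟨i₀, hi₀⟩ := Function.ne_iff.1 hu
  refine (Matrix.rank_le_card_of_col_mem_span _ fun Y => ?_).trans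
    (card_filter_notMem_le_choose i₀ p)
  simpa using wedgeMatrix_col_mem_span hi₀ Y

end WedgeRank

lemma Matrix.isClosed_setOf_rank_le {m n 𝕜 : Type*} [Fintype m] [Fintype n]
    [NontriviallyNormedField 𝕜] [CompleteSpace 𝕜] (k : ℕ) :
    IsClosed {A : Matrix m n 𝕜 | A.rank ≤ k} := by
  classical
  let toCLM : Matrix m n 𝕜 →ₗ[𝕜] (n → 𝕜) →L[𝕜] (m → 𝕜) :=
    (toLin'.trans LinearMap.toContinuousLinearMap).toLinearMap
  have hopen :=
    (isOpen_setOfPred_nat_le_rank (k + 1)).preimage toCLM.continuous_of_finiteDimensional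
  convert hopen.isClosed_compl using 1
  ext A
  simp [toCLM, rank, LinearMap.rank, ← Module.finrank_eq_rank]
  rfl

section BorderRank

variable {ι κ μ : Type*} [Fintype ι] [Fintype κ]

lemma exists_eq_sum_rankOne (T : ι → κ → μ → ℂ) :
    ∃ r, ∃ u : Fin r → ι → ℂ, ∃ v : Fin r → κ → ℂ, ∃ w : Fin r → μ → ℂ,
      T = fun i j k => ∑ s, u s i * v s j * w s k := by
  classical
  let e := (Fintype.equivFin (ι × κ)).symm
  refine ⟨_, fun s => Pi.single (e s).1 1, fun s => Pi.single (e s).2 1,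
    fun s => T (e s).1 (e s).2, ?_⟩
  ext i j k
  dsimp only
  rw [Fintype.sum_equiv e _
    (fun x => (Pi.single x.1 1 : ι → ℂ) i * (Pi.single x.2 1 : κ → ℂ) j * T x.1 x.2 k)
    fun _ => rfl,
    Fintype.sum_prod_type]
  simp [Pi.single_apply]

lemma mem_closure_tBorderRank [Fintype μ] (T : ι → κ → μ → ℂ) :
    T ∈ closure {S : ι → κ → μ → ℂ |
      ∃ u : Fin (tBorderRank T) → ι → ℂ, ∃ v : Fin (tBorderRank T) → κ → ℂ,
        ∃ w : Fin (tBorderRank T) → μ → ℂ, S = fun i j k => ∑ s, u s i * v s j * w s k} := by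
  obtain ⟨r, u, v, w, hT⟩ := exists_eq_sum_rankOne T
  exact Nat.sInf_mem (s := {r | T ∈ closure {S : ι → κ → μ → ℂ |
      ∃ u : Fin r → ι → ℂ, ∃ v : Fin r → κ → ℂ, ∃ w : Fin r → μ → ℂ,
        S = fun i j k => ∑ s, u s i * v s j * w s k}}) ⟨r, subset_closure ⟨u, v, w, hT⟩⟩

end BorderRank

section KoszulFlattening

variable {a b c : ℕ}

noncomputable def koszulFlatteningₗ (p : ℕ) :
    (Fin a → Fin b → Fin c → ℂ) →ₗ[ℂ]
      Matrix ({S : Finset (Fin a) // #S = p + 1} × Fin c)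
        ({S : Finset (Fin a) // #S = p} × Fin b) ℂ where
  toFun T := koszulFlattening T p
  map_add' T T' := by
    ext
    simp only [koszulFlattening, Matrix.add_apply, ← sum_add_distrib]
    refine sum_congr rfl fun i _ => ?_
    split_ifs <;> simp only [Pi.add_apply, mul_add, add_zero]
  map_smul' z T := by
    ext
    simp only [koszulFlattening, Matrix.smul_apply, smul_eq_mul, mul_sum]
    refine sum_congr rfl fun i _ => ?_
    split_ifs <;>
      simp only [Pi.smul_apply, smul_eq_mul, RingHom.id_apply, mul_zero, mul_left_comm]

lemma koszulFlattening_rankOne (u : Fin a → ℂ) (v : Fin b → ℂ) (w : Fin c → ℂ) (p : ℕ) :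
    koszulFlattening (fun i j k => u i * v j * w k) p = wedgeMatrix u p ⊗ₖ vecMulVec w v := by
  ext ⟨X, k⟩ ⟨Y, j⟩
  simp only [koszulFlattening, kroneckerMap_apply, vecMulVec_apply, wedgeMatrix, of_apply,
    wedgeCoeff, wedgeSign, sum_mul]
  refine sum_congr rfl fun i _ => ?_
  split_ifs <;> ring

lemma rank_koszulFlattening_sum_rankOne_le {r : ℕ} (u : Fin r → Fin a → ℂ)
    (v : Fin r → Fin b → ℂ) (w : Fin r → Fin c → ℂ) (p : ℕ) :
    (koszulFlattening (fun i j k => ∑ s, u s i * v s j * w s k) p).rank ≤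
      r * (a - 1).choose p := by
  have hT : (fun i j k => ∑ s, u s i * v s j * w s k) =
      ∑ s, fun i j k => u s i * v s j * w s k := by
    ext; simp only [Finset.sum_apply]
  calc _ = (∑ s, koszulFlattening (fun i j k => u s i * v s j * w s k) p).rank := by
        rw [hT]; exact congrArg rank (map_sum (koszulFlatteningₗ p) _ _)
    _ ≤ ∑ s, (koszulFlattening (fun i j k => u s i * v s j * w s k) p).rank := rank_sum_le _ _
    _ ≤ ∑ _s : Fin r, (a - 1).choose p := sum_le_sum fun s _ => by
        rw [koszulFlattening_rankOne]
        simpa using (rank_kronecker_vecMulVec_le _ _ _).trans (rank_wedgeMatrix_le (u s) p)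
    _ = r * (a - 1).choose p := by simp

end KoszulFlattening

/-- The Koszul flattening lower bound for border rank:
`R̲(T) ≥ rank(T_A^{∧p}) / C(dim A − 1, p)`. -/
theorem koszul_flattening_bound {a b c : ℕ} (T : Fin a → Fin b → Fin c → ℂ) (p : ℕ) :
    (koszulFlattening T p).rank ≤ tBorderRank T * Nat.choose (a - 1) p := by
  have hclosed : IsClosed {S : Fin a → Fin b → Fin c → ℂ |
      (koszulFlattening S p).rank ≤ tBorderRank T * (a - 1).choose p} :=
    (isClosed_setOf_rank_le _).preimage (koszulFlatteningₗ p).continuous_of_finiteDimensional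
  refine closure_minimal ?_ hclosed (mem_closure_tBorderRank T)
  rintro _ ⟨u, v, w, rfl⟩
  exact rank_koszulFlattening_sum_rankOne_le u v w p
end

section
/- Every nonzero element of the span T_{cw,2}^{⊠k}(C*) = ⟨Σ_{σ∈ℤ₂^k} σ·(a_{i_1,…,i_k} ⊗ b_{j_1,…,j_k}) : i_α ≠ j_α for all α⟩ ⊂ ℂ^{3^k} ⊗ ℂ^{3^k}, where σ acts by swapping corresponding indices in each slot, has matrix rank at least 2^k. -/
/-!
Pick `l₀` with `γ l₀ ≠ 0`. For each coordinate `α`, the two elements `i ≠ j` of `Fin 3` other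
than `l₀ α` can be put in rows and columns in two ways, and `T_{cw,2}(i, j, ·) = e_{l₀ α}` exactly
when the choices agree, while disagreeing choices give `i = j` and hence `T_{cw,2}(i, i, ·) = 0`.
Taking these choices in every coordinate selects a `2^k × 2^k` submatrix equal to `γ l₀ • 1`.
-/

open scoped BigOperators

/-- The tensor `T_{cw,2} = Σ_{σ ∈ S₃} a_{σ(1)} ⊗ b_{σ(2)} ⊗ c_{σ(3)}` in `ℂ³ ⊗ ℂ³ ⊗ ℂ³`. -/
noncomputable def Tcw2 : Fin 3 → Fin 3 → Fin 3 → ℂ := fun i j k =>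
  ∑ σ : Equiv.Perm (Fin 3), if i = σ 0 ∧ j = σ 1 ∧ k = σ 2 then 1 else 0

open Finset Matrix

section KroneckerPower

variable {K m n κ β : Type*} [Field K] [Fintype κ]

/-- The image of `γ ∈ (K^{κ^k})*` under the `k`-th Kronecker power of `T`, as a matrix. -/
def kronPowContract (T : m → n → κ → K) (k : ℕ) (γ : (Fin k → κ) → K) :
    Matrix (Fin k → m) (Fin k → n) K :=
  Matrix.of fun i j => ∑ l, γ l * ∏ α, T (i α) (j α) (l α)

lemma exists_ne_zero_of_kronPowContract_ne_zero {T : m → n → κ → K} {k : ℕ}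
    {γ : (Fin k → κ) → K} (h : kronPowContract T k γ ≠ 0) : ∃ l, γ l ≠ 0 := by
  contrapose! h
  ext i j
  simp [kronPowContract, h]

lemma kronPowContract_submatrix_eq_diagonal [DecidableEq κ] [DecidableEq β]
    {T : m → n → κ → K} (r : κ → β → m) (d : κ → β → n)
    (hT : ∀ c s t l, T (r c s) (d c t) l = if s = t ∧ l = c then 1 else 0)
    {k : ℕ} (γ : (Fin k → κ) → K) (l₀ : Fin k → κ) :
    (kronPowContract T k γ).submatrix (fun (s : Fin k → β) α => r (l₀ α) (s α))
        (fun (t : Fin k → β) α => d (l₀ α) (t α)) = diagonal fun _ => γ l₀ := by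
  ext s t
  have hprod : ∀ l : Fin k → κ, ∏ α, T (r (l₀ α) (s α)) (d (l₀ α) (t α)) (l α) =
      if s = t ∧ l = l₀ then 1 else 0 := by
    intro l
    simp only [hT, Fintype.prod_boole, funext_iff, forall_and]
  simp only [kronPowContract, submatrix_apply, of_apply, hprod, diagonal_apply, mul_ite, mul_one,
    mul_zero]
  by_cases hst : s = t <;> simp [hst]

theorem card_pow_le_rank_kronPowContract [Fintype n] [Fintype β] [DecidableEq κ] [DecidableEq β]
    {T : m → n → κ → K} (r : κ → β → m) (d : κ → β → n)
    (hT : ∀ c s t l, T (r c s) (d c t) l = if s = t ∧ l = c then 1 else 0)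
    {k : ℕ} {γ : (Fin k → κ) → K} (h : kronPowContract T k γ ≠ 0) :
    Fintype.card β ^ k ≤ (kronPowContract T k γ).rank := by
  classical
  obtain ⟨l₀, hl₀⟩ := exists_ne_zero_of_kronPowContract_ne_zero h
  calc Fintype.card β ^ k = (diagonal fun _ : Fin k → β => γ l₀).rank := by
        simp [rank_diagonal, hl₀]
    _ = ((kronPowContract T k γ).submatrix (fun (s : Fin k → β) α => r (l₀ α) (s α))
          (fun (t : Fin k → β) α => d (l₀ α) (t α))).rank := by
        rw [kronPowContract_submatrix_eq_diagonal r d hT]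
    _ ≤ _ := rank_submatrix_le _ _ _

end KroneckerPower

lemma Tcw2_succAbove_succAbove_rev (c : Fin 3) (s t : Fin 2) (l : Fin 3) :
    Tcw2 (c.succAbove s) (c.succAbove t.rev) l = if s = t ∧ l = c then 1 else 0 := by
  have hcard : #{σ : Equiv.Perm (Fin 3) | c.succAbove s = σ 0 ∧ c.succAbove t.rev = σ 1 ∧ l = σ 2}
      = if s = t ∧ l = c then 1 else 0 := by
    revert c s t l; decide
  simp only [Tcw2, sum_boole, hcard]
  split_ifs <;> simp

/-- Every nonzero element of the image `T_{cw,2}^{⊠k}(C*) ⊆ ℂ^{3^k} ⊗ ℂ^{3^k}` (where the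
`k`-th Kronecker power is indexed by `Fin k → Fin 3`) has matrix rank at least `2^k`. -/
theorem Tcw2_kronPow_image_rank_ge (k : ℕ) (γ : (Fin k → Fin 3) → ℂ)
    (hne : (Matrix.of fun i j : Fin k → Fin 3 =>
        ∑ l : Fin k → Fin 3, γ l * ∏ α, Tcw2 (i α) (j α) (l α)) ≠ 0) :
    2 ^ k ≤ (Matrix.of fun i j : Fin k → Fin 3 =>
        ∑ l : Fin k → Fin 3, γ l * ∏ α, Tcw2 (i α) (j α) (l α)).rank := by
  have h := card_pow_le_rank_kronPowContract (fun c : Fin 3 => c.succAbove)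
    (fun c t => c.succAbove t.rev) Tcw2_succAbove_succAbove_rev (γ := γ) hne
  rwa [Fintype.card_fin] at h
end
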